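/- arXiv:1207.1114 — 2 statements merged into one kernel-verified Lean document; each statement's English description precedes it below -/
import Mathlib

section
/- (Theorem 1, contraction step) Let n ≥ n', let A be a real symmetric n×n matrix, A' a real symmetric n'×n' matrix, K a real n×n' matrix, λ ≥ 0, α ∈ [0,1], and let ε > 0 satisfy ‖A‖₂·‖A'‖₂ < ε, where ‖·‖₂ denotes the spectral (ℓ₂ operator) norm. Given any real n×n' matrix X⁽⁰⁾, define the sequence X⁽ᵗ⁺¹⁾ = (1−α)X⁽ᵗ⁾ + α·P_d(A X⁽ᵗ⁾ A' + λK). Then for all t ≥ 1, ‖X⁽ᵗ⁺¹⁾ − X⁽ᵗ⁾‖_F ≤ (1−α+αε)·‖X⁽ᵗ⁾ − X⁽ᵗ⁻¹⁾‖_F. -/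
/-- The Frobenius norm of a real matrix. -/
noncomputable def frobNorm {m p : Type*} [Fintype m] [Fintype p] (A : Matrix m p ℝ) : ℝ :=
  Real.sqrt (∑ i, ∑ j, (A i j) ^ 2)

/-- The spectral (ℓ₂ operator) norm of a real square matrix. -/
noncomputable def specNorm {m : Type*} [Fintype m] [DecidableEq m] (A : Matrix m m ℝ) : ℝ :=
  ‖Matrix.toEuclideanCLM (𝕜 := ℝ) A‖

/-- `Omega n n'` is the set of partial doubly stochastic matrices: real `n × n'` matrices
with row sums at most 1, column sums equal to 1, and nonnegative entries. -/
def Omega (n n' : ℕ) : Set (Matrix (Fin n) (Fin n') ℝ) :=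
  {X | (∀ i, ∑ j, X i j ≤ 1) ∧ (∀ j, ∑ i, X i j = 1) ∧ (∀ i j, 0 ≤ X i j)}

/-!
`P_d` is the metric projection onto the convex set `Ω(n,n')`, so the variational inequality
makes it `1`-Lipschitz for the Frobenius norm. Acting column by column and row by row,
`Y ↦ A Y A'` is `‖A‖₂‖A'‖₂`-Lipschitz for the Frobenius norm. Hence the relaxed map
`X ↦ (1-α)X + α P_d(A X A' + λK)` is `(1-α+α‖A‖₂‖A'‖₂)`-Lipschitz, and
`X⁽ᵗ⁺¹⁾ - X⁽ᵗ⁾` is the difference of its values at `X⁽ᵗ⁾` and `X⁽ᵗ⁻¹⁾`.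
-/

open Matrix RealInnerProductSpace

section InnerProductSpace

variable {F : Type*} [NormedAddCommGroup F] [InnerProductSpace ℝ F] {K : Set F}

theorem inner_sub_nonpos_of_forall_norm_sub_le (hK : Convex ℝ K) {u v : F} (hv : v ∈ K)
    (hmin : ∀ w ∈ K, ‖u - v‖ ≤ ‖u - w‖) : ∀ w ∈ K, ⟪u - v, w - v⟫ ≤ 0 := by
  have : Nonempty K := ⟨⟨v, hv⟩⟩
  rw [← norm_eq_iInf_iff_real_inner_le_zero hK hv]
  exact le_antisymm (le_ciInf fun w => hmin w w.2)
    (ciInf_le ⟨0, Set.forall_mem_range.2 fun _ => norm_nonneg _⟩ (⟨v, hv⟩ : K))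

theorem norm_sub_le_of_forall_norm_sub_le (hK : Convex ℝ K) {u₁ u₂ v₁ v₂ : F}
    (hv₁ : v₁ ∈ K) (hv₂ : v₂ ∈ K) (h₁ : ∀ w ∈ K, ‖u₁ - v₁‖ ≤ ‖u₁ - w‖)
    (h₂ : ∀ w ∈ K, ‖u₂ - v₂‖ ≤ ‖u₂ - w‖) : ‖v₁ - v₂‖ ≤ ‖u₁ - u₂‖ := by
  have k₁ := inner_sub_nonpos_of_forall_norm_sub_le hK hv₁ h₁ v₂ hv₂
  have k₂ := inner_sub_nonpos_of_forall_norm_sub_le hK hv₂ h₂ v₁ hv₁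
  have hcs := real_inner_le_norm (u₁ - u₂) (v₁ - v₂)
  -- the sum of the two variational inequalities is `‖v₁ - v₂‖² ≤ ⟪u₁ - u₂, v₁ - v₂⟫`
  have hsq : ‖v₁ - v₂‖ ^ 2 ≤ ‖u₁ - u₂‖ * ‖v₁ - v₂‖ := by
    rw [← real_inner_self_eq_norm_sq]
    simp only [inner_sub_left, inner_sub_right, real_inner_comm] at k₁ k₂ hcs ⊢
    linarith
  nlinarith [norm_nonneg (v₁ - v₂), norm_nonneg (u₁ - u₂)]

end InnerProductSpace

theorem norm_relax_sub_le {E : Type*} [SeminormedAddCommGroup E] [NormedSpace ℝ E] {α L : ℝ}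
    (hα : α ∈ Set.Icc (0 : ℝ) 1) {x y u v : E} (h : ‖u - v‖ ≤ L * ‖x - y‖) :
    ‖((1 - α) • x + α • u) - ((1 - α) • y + α • v)‖ ≤ (1 - α + α * L) * ‖x - y‖ := by
  obtain ⟨hα₀, hα₁⟩ := hα
  calc ‖((1 - α) • x + α • u) - ((1 - α) • y + α • v)‖
      = ‖(1 - α) • (x - y) + α • (u - v)‖ := by congr 1; module
    _ ≤ (1 - α) * ‖x - y‖ + α * ‖u - v‖ := by
      grw [norm_add_le, norm_smul, norm_smul, Real.norm_of_nonneg hα₀,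
        Real.norm_of_nonneg (sub_nonneg.2 hα₁)]
    _ ≤ (1 - α) * ‖x - y‖ + α * (L * ‖x - y‖) := by gcongr
    _ = (1 - α + α * L) * ‖x - y‖ := by ring

section SpectralNorm

variable {m : Type*} [Fintype m] [DecidableEq m]

open scoped Matrix.Norms.L2Operator in
theorem specNorm_transpose (A : Matrix m m ℝ) : specNorm Aᵀ = specNorm A := by
  simpa [specNorm, l2_opNorm_toEuclideanCLM] using A.l2_opNorm_conjTranspose

open scoped Matrix.Norms.L2Operator in
theorem norm_mulVec_le_specNorm_mul (A : Matrix m m ℝ) (v : m → ℝ) :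
    ‖WithLp.toLp 2 (A *ᵥ v)‖ ≤ specNorm A * ‖WithLp.toLp 2 v‖ :=
  A.l2_opNorm_mulVec (WithLp.toLp 2 v)

end SpectralNorm

section FrobeniusNorm

variable {m p : Type*} [Fintype m] [Fintype p]

noncomputable def Matrix.toEuclideanVec : Matrix m p ℝ ≃ₗ[ℝ] EuclideanSpace ℝ (m × p) :=
  (LinearEquiv.curry ℝ ℝ m p).symm.trans (WithLp.linearEquiv 2 ℝ _).symm

theorem frobNorm_eq_norm_toEuclideanVec (X : Matrix m p ℝ) :
    frobNorm X = ‖toEuclideanVec X‖ := by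
  rw [frobNorm, EuclideanSpace.norm_eq, Fintype.sum_prod_type]
  simp only [Real.norm_eq_abs, sq_abs]
  rfl

theorem frobNorm_nonneg (X : Matrix m p ℝ) : 0 ≤ frobNorm X :=
  Real.sqrt_nonneg _

theorem frobNorm_transpose (X : Matrix m p ℝ) : frobNorm Xᵀ = frobNorm X := by
  rw [frobNorm, frobNorm, Finset.sum_comm]
  rfl

theorem frobNorm_eq_sqrt_sum_norm_col (X : Matrix m p ℝ) :
    frobNorm X = √(∑ j, ‖WithLp.toLp 2 (fun i => X i j)‖ ^ 2) := by
  simp only [frobNorm, EuclideanSpace.norm_sq_eq, Real.norm_eq_abs, sq_abs]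
  rw [Finset.sum_comm]

theorem frobNorm_mul_le_specNorm_mul [DecidableEq m] (A : Matrix m m ℝ) (X : Matrix m p ℝ) :
    frobNorm (A * X) ≤ specNorm A * frobNorm X := by
  have hcol (j : p) : (fun i => (A * X) i j) = A *ᵥ fun i => X i j := by
    ext i
    simp [mul_apply, mulVec, dotProduct]
  have hA : 0 ≤ specNorm A := norm_nonneg _
  rw [frobNorm_eq_sqrt_sum_norm_col, frobNorm_eq_sqrt_sum_norm_col, ← Real.sqrt_sq hA,
    ← Real.sqrt_mul (sq_nonneg _), Finset.mul_sum]
  gcongr with j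
  rw [hcol, ← mul_pow]
  gcongr
  exact norm_mulVec_le_specNorm_mul A _

theorem frobNorm_mul_le_mul_specNorm [DecidableEq p] (X : Matrix m p ℝ) (B : Matrix p p ℝ) :
    frobNorm (X * B) ≤ frobNorm X * specNorm B := by
  rw [← frobNorm_transpose, transpose_mul, ← frobNorm_transpose X, ← specNorm_transpose B,
    mul_comm]
  exact frobNorm_mul_le_specNorm_mul _ _

theorem frobNorm_sub_le_of_forall_frobNorm_sub_le {S : Set (Matrix m p ℝ)} (hS : Convex ℝ S)
    {P : Matrix m p ℝ → Matrix m p ℝ} (hmem : ∀ Y, P Y ∈ S)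
    (hmin : ∀ Y, ∀ D ∈ S, frobNorm (Y - P Y) ≤ frobNorm (Y - D)) (Y Z : Matrix m p ℝ) :
    frobNorm (P Y - P Z) ≤ frobNorm (Y - Z) := by
  have hmin' (Y) : ∀ w ∈ toEuclideanVec '' S,
      ‖toEuclideanVec Y - toEuclideanVec (P Y)‖ ≤ ‖toEuclideanVec Y - w‖ := by
    rintro _ ⟨D, hD, rfl⟩
    simpa only [frobNorm_eq_norm_toEuclideanVec, map_sub] using hmin Y D hD
  simpa only [frobNorm_eq_norm_toEuclideanVec, map_sub, LinearEquiv.coe_coe] using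
    norm_sub_le_of_forall_norm_sub_le (hS.linear_image toEuclideanVec.toLinearMap)
      (Set.mem_image_of_mem _ (hmem Y)) (Set.mem_image_of_mem _ (hmem Z)) (hmin' Y) (hmin' Z)

theorem frobNorm_relax_sub_le {α L : ℝ} (hα : α ∈ Set.Icc (0 : ℝ) 1) {X Y U V : Matrix m p ℝ}
    (h : frobNorm (U - V) ≤ L * frobNorm (X - Y)) :
    frobNorm (((1 - α) • X + α • U) - ((1 - α) • Y + α • V)) ≤
      (1 - α + α * L) * frobNorm (X - Y) := by
  simp only [frobNorm_eq_norm_toEuclideanVec, map_sub, map_add, map_smul] at h ⊢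
  exact norm_relax_sub_le hα h

end FrobeniusNorm

theorem convex_Omega (n n' : ℕ) : Convex ℝ (Omega n n') := by
  rintro X ⟨hXr, hXc, hX0⟩ Y ⟨hYr, hYc, hY0⟩ a b ha hb hab
  refine ⟨fun i => ?_, fun j => ?_, fun i j => ?_⟩ <;>
    simp only [Matrix.add_apply, Matrix.smul_apply, smul_eq_mul, Finset.sum_add_distrib,
      ← Finset.mul_sum]
  · nlinarith [hXr i, hYr i]
  · rw [hXc j, hYc j]
    linarith
  · have := hX0 i j
    have := hY0 i j
    positivity

section FastPFP

variable {m p : Type*} [Fintype m] [Fintype p]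

def fastPFPStep (Pd : Matrix m p ℝ → Matrix m p ℝ) (A : Matrix m m ℝ) (A' : Matrix p p ℝ)
    (K : Matrix m p ℝ) (lam α : ℝ) (X : Matrix m p ℝ) : Matrix m p ℝ :=
  (1 - α) • X + α • Pd (A * X * A' + lam • K)

theorem frobNorm_fastPFPStep_sub_le [DecidableEq m] [DecidableEq p] {S : Set (Matrix m p ℝ)}
    (hS : Convex ℝ S) {Pd : Matrix m p ℝ → Matrix m p ℝ} (hPd_mem : ∀ Y, Pd Y ∈ S)
    (hPd_min : ∀ Y, ∀ D ∈ S, frobNorm (Y - Pd Y) ≤ frobNorm (Y - D))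
    (A : Matrix m m ℝ) (A' : Matrix p p ℝ) (K : Matrix m p ℝ) (lam : ℝ) {α : ℝ}
    (hα : α ∈ Set.Icc (0 : ℝ) 1) (X Y : Matrix m p ℝ) :
    frobNorm (fastPFPStep Pd A A' K lam α X - fastPFPStep Pd A A' K lam α Y) ≤
      (1 - α + α * (specNorm A * specNorm A')) * frobNorm (X - Y) := by
  refine frobNorm_relax_sub_le hα ?_
  calc frobNorm (Pd (A * X * A' + lam • K) - Pd (A * Y * A' + lam • K))
      ≤ frobNorm (A * X * A' + lam • K - (A * Y * A' + lam • K)) :=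
        frobNorm_sub_le_of_forall_frobNorm_sub_le hS hPd_mem hPd_min _ _
    _ = frobNorm (A * (X - Y) * A') := by
        rw [add_sub_add_right_eq_sub, Matrix.mul_sub, Matrix.sub_mul]
    _ ≤ frobNorm (A * (X - Y)) * specNorm A' := frobNorm_mul_le_mul_specNorm _ _
    _ ≤ specNorm A * frobNorm (X - Y) * specNorm A' := by
        gcongr
        · exact norm_nonneg _
        · exact frobNorm_mul_le_specNorm_mul _ _
    _ = specNorm A * specNorm A' * frobNorm (X - Y) := by ring

end FastPFP

theorem fastPFP_contraction_step_general (n n' : ℕ)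
    (A : Matrix (Fin n) (Fin n) ℝ)
    (A' : Matrix (Fin n') (Fin n') ℝ)
    (K : Matrix (Fin n) (Fin n') ℝ) (lam : ℝ)
    (α : ℝ) (hα : α ∈ Set.Icc (0 : ℝ) 1) (ε : ℝ)
    (hspec : specNorm A * specNorm A' < ε)
    (Pd : Matrix (Fin n) (Fin n') ℝ → Matrix (Fin n) (Fin n') ℝ)
    (hPd_mem : ∀ Y, Pd Y ∈ Omega n n')
    (hPd_min : ∀ Y, ∀ D ∈ Omega n n', frobNorm (Y - Pd Y) ≤ frobNorm (Y - D))
    (X : ℕ → Matrix (Fin n) (Fin n') ℝ)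
    (hX : ∀ t, X (t + 1) = (1 - α) • X t + α • Pd (A * X t * A' + lam • K))
    (t : ℕ) (ht : 1 ≤ t) :
    frobNorm (X (t + 1) - X t) ≤ (1 - α + α * ε) * frobNorm (X t - X (t - 1)) := by
  obtain ⟨s, rfl⟩ : ∃ s, t = s + 1 := ⟨t - 1, by omega⟩
  have hstep (r : ℕ) : X (r + 1) = fastPFPStep Pd A A' K lam α (X r) := hX r
  rw [Nat.add_sub_cancel, hstep (s + 1), hstep s]
  refine (frobNorm_fastPFPStep_sub_le (convex_Omega n n') hPd_mem hPd_min A A' K lam hα _ _).trans ?_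
  gcongr
  · exact frobNorm_nonneg _
  · exact hα.1

/-- (Theorem 1, contraction step) For the FastPFP iteration
`X⁽ᵗ⁺¹⁾ = (1−α)X⁽ᵗ⁾ + α·P_d(A X⁽ᵗ⁾ A' + λK)` with `‖A‖₂·‖A'‖₂ < ε`, one has
`‖X⁽ᵗ⁺¹⁾ − X⁽ᵗ⁾‖_F ≤ (1−α+αε)·‖X⁽ᵗ⁾ − X⁽ᵗ⁻¹⁾‖_F` for all `t ≥ 1`. -/
theorem fastPFP_contraction_step (n n' : ℕ) (hn' : 0 < n') (hnn : n' ≤ n)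
    (A : Matrix (Fin n) (Fin n) ℝ) (hA : A.IsSymm)
    (A' : Matrix (Fin n') (Fin n') ℝ) (hA' : A'.IsSymm)
    (K : Matrix (Fin n) (Fin n') ℝ) (lam : ℝ) (hlam : 0 ≤ lam)
    (α : ℝ) (hα : α ∈ Set.Icc (0 : ℝ) 1) (ε : ℝ) (hε : 0 < ε)
    (hspec : specNorm A * specNorm A' < ε)
    (Pd : Matrix (Fin n) (Fin n') ℝ → Matrix (Fin n) (Fin n') ℝ)
    (hPd_mem : ∀ Y, Pd Y ∈ Omega n n')
    (hPd_min : ∀ Y, ∀ D ∈ Omega n n', frobNorm (Y - Pd Y) ≤ frobNorm (Y - D))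
    (X : ℕ → Matrix (Fin n) (Fin n') ℝ)
    (hX : ∀ t, X (t + 1) = (1 - α) • X t + α • Pd (A * X t * A' + lam • K))
    (t : ℕ) (ht : 1 ≤ t) :
    frobNorm (X (t + 1) - X t) ≤ (1 - α + α * ε) * frobNorm (X t - X (t - 1)) :=
  fastPFP_contraction_step_general n n' A A' K lam α hα ε hspec Pd hPd_mem hPd_min X hX t ht
end

section
/- (Closed form of the affine projection P₁) Let Y be a real n×n matrix, let 𝟙 be the all-ones column vector in ℝⁿ, let J = 𝟙𝟙ᵀ be the n×n all-ones matrix, and let s = 𝟙ᵀY𝟙 be the sum of all entries of Y. Then the matrix D* = Y + ((1/n)I + (s/n²)I − (1/n)Y)·J − (1/n)·J·Y satisfies D*·𝟙 = 𝟙 and D*ᵀ·𝟙 = 𝟙, and D* is the unique minimizer of ‖Y − D‖_F over all real n×n matrices D satisfying D·𝟙 = 𝟙 and Dᵀ·𝟙 = 𝟙. -/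
open Matrix

/-- (Closed form of the affine projection `P₁`) With `J = 𝟙𝟙ᵀ` the all-ones matrix and
`s = 𝟙ᵀY𝟙` the sum of all entries of `Y`, the matrix
`D* = Y + ((1/n)I + (s/n²)I − (1/n)Y)·J − (1/n)·J·Y` has all row sums and all column sums
equal to 1, and it is the unique minimizer of `‖Y − D‖_F` over all real `n × n` matrices `D`
with all row sums and all column sums equal to 1. -/
theorem affine_projection_closed_form (n : ℕ) (hn : 0 < n)
    (Y : Matrix (Fin n) (Fin n) ℝ)
    (J : Matrix (Fin n) (Fin n) ℝ) (hJ : ∀ i j, J i j = 1)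
    (s : ℝ) (hs : s = ∑ i, ∑ j, Y i j)
    (Dstar : Matrix (Fin n) (Fin n) ℝ)
    (hDstar : Dstar = Y + ((1 / (n : ℝ)) • (1 : Matrix (Fin n) (Fin n) ℝ)
        + (s / (n : ℝ) ^ 2) • (1 : Matrix (Fin n) (Fin n) ℝ) - (1 / (n : ℝ)) • Y) * J
        - (1 / (n : ℝ)) • (J * Y)) :
    (∀ i, ∑ j, Dstar i j = 1) ∧ (∀ j, ∑ i, Dstar i j = 1) ∧
      ∀ D : Matrix (Fin n) (Fin n) ℝ,
        (∀ i, ∑ j, D i j = 1) → (∀ j, ∑ i, D i j = 1) →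
          frobNorm (Y - Dstar) ≤ frobNorm (Y - D)
            ∧ (frobNorm (Y - D) = frobNorm (Y - Dstar) → D = Dstar) := by
  have hn0 : (n : ℝ) ≠ 0 := Nat.cast_ne_zero.mpr hn.ne'
  set r : Fin n → ℝ := fun i => ∑ j, Y i j with hr
  set c : Fin n → ℝ := fun j => ∑ i, Y i j with hc
  have hsc : ∑ j, c j = s := by
    rw [hs]; exact Finset.sum_comm
  have hsr : ∑ i, r i = s := hs.symm
  -- entrywise formula for Dstar
  have hD : ∀ i j, Dstar i j
      = Y i j + 1 / n + s / (n : ℝ) ^ 2 - (1 / n) * r i - (1 / n) * c j := by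
    intro i j
    have h1 : (((1 / (n : ℝ)) • (1 : Matrix (Fin n) (Fin n) ℝ)
        + (s / (n : ℝ) ^ 2) • (1 : Matrix (Fin n) (Fin n) ℝ) - (1 / (n : ℝ)) • Y) * J) i j
        = 1 / n + s / (n : ℝ) ^ 2 - (1 / n) * r i := by
      rw [Matrix.mul_apply]
      have : ∀ k, (((1 / (n : ℝ)) • (1 : Matrix (Fin n) (Fin n) ℝ)
          + (s / (n : ℝ) ^ 2) • (1 : Matrix (Fin n) (Fin n) ℝ) - (1 / (n : ℝ)) • Y) i k) * J k j
          = ((1 / (n : ℝ)) * (if i = k then 1 else 0)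
            + (s / (n : ℝ) ^ 2) * (if i = k then 1 else 0) - (1 / (n : ℝ)) * Y i k) := by
        intro k
        simp [Matrix.add_apply, Matrix.sub_apply, Matrix.smul_apply, Matrix.one_apply,
          hJ i, hJ k j]
      rw [Finset.sum_congr rfl fun k _ => this k]
      rw [Finset.sum_sub_distrib, Finset.sum_add_distrib, ← Finset.mul_sum, ← Finset.mul_sum,
        ← Finset.mul_sum]
      simp [hr]
    have h2 : ((1 / (n : ℝ)) • (J * Y)) i j = (1 / n) * c j := by
      rw [Matrix.smul_apply, Matrix.mul_apply]
      have : ∀ k, J i k * Y k j = Y k j := fun k => by rw [hJ]; ring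
      rw [Finset.sum_congr rfl fun k _ => this k]
      simp [hc, Finset.mul_sum]
    rw [hDstar]
    simp only [Matrix.sub_apply, Matrix.add_apply]
    rw [h1, h2]
    ring
  -- row sums of Dstar
  have hrow : ∀ i, ∑ j, Dstar i j = 1 := by
    intro i
    rw [Finset.sum_congr rfl fun j _ => hD i j]
    rw [Finset.sum_sub_distrib, Finset.sum_sub_distrib, Finset.sum_add_distrib,
      Finset.sum_add_distrib, ← Finset.mul_sum]
    simp only [Finset.sum_const, Finset.card_univ, Fintype.card_fin, nsmul_eq_mul]
    rw [← Finset.mul_sum, hsc]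
    have hri : ∑ x, Y i x = r i := rfl
    rw [hri]
    field_simp
    ring
  have hcol : ∀ j, ∑ i, Dstar i j = 1 := by
    intro j
    rw [Finset.sum_congr rfl fun i _ => hD i j]
    rw [Finset.sum_sub_distrib, Finset.sum_sub_distrib, Finset.sum_add_distrib,
      Finset.sum_add_distrib, ← Finset.mul_sum]
    simp only [Finset.sum_const, Finset.card_univ, Fintype.card_fin, nsmul_eq_mul]
    rw [hsr]
    have hcj : ∑ x, Y x j = c j := rfl
    rw [hcj]
    field_simp
    ring
  refine ⟨hrow, hcol, ?_⟩
  intro D hDrow hDcol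
  -- G = Dstar - D has zero row and column sums
  have hGrow : ∀ i, ∑ j, (Dstar i j - D i j) = 0 := by
    intro i; rw [Finset.sum_sub_distrib, hrow i, hDrow i]; ring
  have hGcol : ∀ j, ∑ i, (Dstar i j - D i j) = 0 := by
    intro j; rw [Finset.sum_sub_distrib, hcol j, hDcol j]; ring
  -- cross term vanishes
  have hE : ∀ i j, Y i j - Dstar i j
      = (1 / n * r i - 1 / n - s / (n : ℝ) ^ 2) + (1 / n * c j) := by
    intro i j; rw [hD i j]; ring
  have hcross : ∑ i, ∑ j, (Y i j - Dstar i j) * (Dstar i j - D i j) = 0 := by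
    have h1 : ∀ i, ∑ j, (Y i j - Dstar i j) * (Dstar i j - D i j)
        = (1 / n * r i - 1 / n - s / (n : ℝ) ^ 2) * (∑ j, (Dstar i j - D i j))
          + ∑ j, (1 / n * c j) * (Dstar i j - D i j) := by
      intro i
      rw [Finset.mul_sum, ← Finset.sum_add_distrib]
      refine Finset.sum_congr rfl fun j _ => ?_
      rw [hE i j]; ring
    rw [Finset.sum_congr rfl fun i _ => h1 i, Finset.sum_add_distrib]
    have h2 : ∑ i, (1 / (n : ℝ) * r i - 1 / n - s / (n : ℝ) ^ 2) * (∑ j, (Dstar i j - D i j))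
        = 0 := by
      refine Finset.sum_eq_zero fun i _ => ?_
      rw [hGrow i]; ring
    have h3 : ∑ i, ∑ j, (1 / (n : ℝ) * c j) * (Dstar i j - D i j) = 0 := by
      rw [Finset.sum_comm]
      refine Finset.sum_eq_zero fun j _ => ?_
      rw [← Finset.mul_sum, hGcol j]; ring
    rw [h2, h3]; ring
  -- Pythagoras
  have hpyth : ∑ i, ∑ j, ((Y - D) i j) ^ 2
      = ∑ i, ∑ j, ((Y - Dstar) i j) ^ 2 + ∑ i, ∑ j, (Dstar i j - D i j) ^ 2 := by
    have expand : ∀ i j, ((Y - D) i j) ^ 2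
        = ((Y - Dstar) i j) ^ 2 + 2 * ((Y i j - Dstar i j) * (Dstar i j - D i j))
          + (Dstar i j - D i j) ^ 2 := by
      intro i j
      simp only [Matrix.sub_apply]
      ring
    calc ∑ i, ∑ j, ((Y - D) i j) ^ 2
        = ∑ i, ∑ j, (((Y - Dstar) i j) ^ 2
            + 2 * ((Y i j - Dstar i j) * (Dstar i j - D i j)) + (Dstar i j - D i j) ^ 2) := by
          exact Finset.sum_congr rfl fun i _ => Finset.sum_congr rfl fun j _ => expand i j
      _ = ∑ i, ∑ j, ((Y - Dstar) i j) ^ 2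
            + 2 * (∑ i, ∑ j, (Y i j - Dstar i j) * (Dstar i j - D i j))
            + ∑ i, ∑ j, (Dstar i j - D i j) ^ 2 := by
          simp only [Finset.sum_add_distrib, Finset.mul_sum]
      _ = _ := by rw [hcross]; ring
  have hGnonneg : 0 ≤ ∑ i, ∑ j, (Dstar i j - D i j) ^ 2 :=
    Finset.sum_nonneg fun i _ => Finset.sum_nonneg fun j _ => sq_nonneg _
  have hEnonneg : 0 ≤ ∑ i, ∑ j, ((Y - Dstar) i j) ^ 2 :=
    Finset.sum_nonneg fun i _ => Finset.sum_nonneg fun j _ => sq_nonneg _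
  constructor
  · apply Real.sqrt_le_sqrt
    rw [hpyth]; linarith
  · intro heq
    -- equality forces the G-term to vanish
    have hsq : ∑ i, ∑ j, ((Y - D) i j) ^ 2 = ∑ i, ∑ j, ((Y - Dstar) i j) ^ 2 := by
      have h1 : Real.sqrt (∑ i, ∑ j, ((Y - D) i j) ^ 2)
          = Real.sqrt (∑ i, ∑ j, ((Y - Dstar) i j) ^ 2) := heq
      exact (Real.sqrt_inj (by rw [hpyth]; linarith) hEnonneg).mp h1
    have hG0 : ∑ i, ∑ j, (Dstar i j - D i j) ^ 2 = 0 := by linarith [hpyth, hsq]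
    ext i j
    have h1 : ∀ i ∈ Finset.univ, (0:ℝ) ≤ ∑ j, (Dstar i j - D i j) ^ 2 :=
      fun i _ => Finset.sum_nonneg fun j _ => sq_nonneg _
    have h2 : ∑ j, (Dstar i j - D i j) ^ 2 = 0 :=
      (Finset.sum_eq_zero_iff_of_nonneg h1).mp hG0 i (Finset.mem_univ i)
    have h3 : (Dstar i j - D i j) ^ 2 = 0 :=
      (Finset.sum_eq_zero_iff_of_nonneg fun j _ => sq_nonneg _).mp h2 j (Finset.mem_univ j)
    have := pow_eq_zero_iff (n := 2) (by norm_num) |>.mp h3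
    linarith
end
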